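/- arXiv:math/0510314 — 7 statements merged into one kernel-verified Lean document; each statement's English description precedes it below -/
import Mathlib

section
/- Let (A, φ, T) be a strictly weak mixing C*-dynamical system and let z be a complex number with |z| = 1 and z ≠ 1. If x ∈ A satisfies T(x) = z·x, then x = 0. -/
open Filter Finset ComplexOrder Topology

/-
The eigenvalue equation gives `(T ^ k) x = z ^ k • x`, and invariance of `φ` together with
`z ≠ 1` forces `φ x = 0`. Hence for every functional `ψ` each term of the Cesàro mean in the
mixing condition equals `‖z ^ k • ψ x‖ = ‖ψ x‖`, so the means are constantly `‖ψ x‖` and their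
limit `0` gives `ψ x = 0`. Since continuous functionals separate points, `x = 0`.
-/

theorem ContinuousLinearMap.pow_apply_eq_pow_smul {R M : Type*} [CommSemiring R]
    [AddCommMonoid M] [TopologicalSpace M] [Module R M]
    {T : M →L[R] M} {z : R} {x : M} (hx : T x = z • x) (k : ℕ) :
    (T ^ k) x = z ^ k • x := by
  induction k with
  | zero => simp
  | succ k ih => rw [pow_succ', mul_apply_eq_comp, ih, map_smul, hx, smul_smul, pow_succ]

theorem ContinuousLinearMap.eq_zero_of_comp_eq_of_apply_eq_smul {𝕜 M : Type*} [Field 𝕜]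
    [TopologicalSpace 𝕜] [AddCommGroup M] [TopologicalSpace M] [Module 𝕜 M]
    (φ : M →L[𝕜] 𝕜) {T : M →L[𝕜] M} (hinv : ∀ y, φ (T y) = φ y)
    {z : 𝕜} (hz1 : z ≠ 1) {x : M} (hx : T x = z • x) : φ x = 0 := by
  have h : (z - 1) * φ x = 0 := by
    linear_combination (by simpa only [hx, map_smul, smul_eq_mul] using hinv x : z * φ x = φ x)
  exact (mul_eq_zero.mp h).resolve_left (sub_ne_zero.mpr hz1)

theorem tendsto_cesaro_const (c : ℝ) :
    Tendsto (fun n : ℕ => (1 / (n : ℝ)) * ∑ _k ∈ range n, c) atTop (𝓝 c) := by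
  refine tendsto_const_nhds.congr' ?_
  filter_upwards [eventually_ne_atTop 0] with n hn
  rw [sum_const, card_range, nsmul_eq_mul]
  field_simp

theorem stmt2_general
    {A : Type*} [NormedRing A] [NormedAlgebra ℂ A]
    (φ : A →L[ℂ] ℂ) (T : A →L[ℂ] A)
    (hinv : ∀ x : A, φ (T x) = φ x)
    (hmix : ∀ (ψ : A →L[ℂ] ℂ) (x : A),
      Tendsto (fun n : ℕ =>
          (1 / (n : ℝ)) * ∑ k ∈ Finset.range n, ‖ψ ((T ^ k) x) - ψ 1 * φ x‖)
        atTop (nhds 0))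
    (z : ℂ) (hz : ‖z‖ = 1) (hz1 : z ≠ 1)
    (x : A) (hx : T x = z • x) : x = 0 := by
  have hφx : φ x = 0 := φ.eq_zero_of_comp_eq_of_apply_eq_smul hinv hz1 hx
  refine SeparatingDual.eq_zero_of_forall_dual_eq_zero (R := ℂ) fun ψ => norm_eq_zero.mp ?_
  have hterm : ∀ k : ℕ, ‖ψ ((T ^ k) x) - ψ 1 * φ x‖ = ‖ψ x‖ := fun k => by
    rw [T.pow_apply_eq_pow_smul hx, map_smul, hφx, mul_zero, sub_zero, norm_smul, norm_pow, hz,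
      one_pow, one_mul]
  exact tendsto_nhds_unique (tendsto_cesaro_const _) (by simpa only [hterm] using hmix ψ x)

/-- A strictly weak mixing system has no eigenvectors with eigenvalue on the unit circle
other than 1. -/
theorem stmt2
    {A : Type*} [NormedRing A] [StarRing A] [CStarRing A] [NormedAlgebra ℂ A]
    [CompleteSpace A] [StarModule ℂ A] [PartialOrder A] [StarOrderedRing A]
    (φ : A →L[ℂ] ℂ) (T : A →L[ℂ] A)
    (hφ1 : φ 1 = 1) (hφpos : ∀ x : A, 0 ≤ φ (star x * x))
    (hT1 : T 1 = 1)
    (hTcp : ∀ (n : ℕ) (a b : Fin n → A),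
      0 ≤ ∑ i, ∑ j, star (b i) * T (star (a i) * a j) * b j)
    (hinv : ∀ x : A, φ (T x) = φ x)
    (hmix : ∀ (ψ : A →L[ℂ] ℂ) (x : A),
      Tendsto (fun n : ℕ =>
          (1 / (n : ℝ)) * ∑ k ∈ Finset.range n, ‖ψ ((T ^ k) x) - ψ 1 * φ x‖)
        atTop (nhds 0))
    (z : ℂ) (hz : ‖z‖ = 1) (hz1 : z ≠ 1)
    (x : A) (hx : T x = z • x) : x = 0 :=
  stmt2_general φ T hinv hmix z hz hz1 x hx
end

section
/- Let (A, φ, T) be a strictly weak mixing C*-dynamical system and let z be a complex number with |z| = 1 and z ≠ 1. If f is a bounded linear functional on A with f ∘ T = z·f, then f = 0. -/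
/-!
Iterating `f ∘ T = z • f` gives `f (Tᵏ x) = zᵏ f(x)`, and `T 1 = 1` with `z ≠ 1` forces `f 1 = 0`.
So in the mixing average for `ψ = f` every term equals `|zᵏ f(x)| = |f(x)|`, the average is the
constant `|f(x)|`, and mixing makes it tend to `0`.
-/

open Filter Finset ComplexOrder

theorem ContinuousLinearMap.coe_pow_eq_iterate {R M : Type*} [Semiring R] [TopologicalSpace M]
    [AddCommMonoid M] [Module R M] (T : M →L[R] M) (k : ℕ) : ⇑(T ^ k) = T^[k] :=
  hom_coe_pow _ rfl (fun _ _ => rfl) _ _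

theorem Function.Semiconj.apply_iterate_eq_pow_mul {α M : Type*} [Monoid M] {f : α → M}
    {T : α → α} {z : M} (h : Function.Semiconj f T (z * ·)) (k : ℕ) (x : α) :
    f (T^[k] x) = z ^ k * f x := by
  rw [(h.iterate_right k).eq, mul_left_iterate]

theorem Function.Semiconj.apply_one_eq_zero_of_ne_one {α R : Type*} [One α] [Ring R]
    [NoZeroDivisors R] {f : α → R} {T : α → α} {z : R} (h : Function.Semiconj f T (z * ·))
    (hT : T 1 = 1) (hz : z ≠ 1) : f 1 = 0 := by
  have hfix : (1 - z) * f 1 = 0 := by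
    rw [sub_mul, one_mul, ← h.eq, hT, sub_self]
  exact (mul_eq_zero.1 hfix).resolve_left (sub_ne_zero.2 hz.symm)

theorem Finset.one_div_mul_sum_range_const {K : Type*} [DivisionSemiring K] [CharZero K]
    (c : K) {n : ℕ} (hn : n ≠ 0) : 1 / (n : K) * ∑ _k ∈ range n, c = c := by
  rw [sum_const, card_range, nsmul_eq_mul, ← mul_assoc, one_div_mul_cancel (Nat.cast_ne_zero.2 hn),
    one_mul]

theorem stmt3_general
    {A : Type*} [NormedRing A] [NormedAlgebra ℂ A]
    (φ : A →L[ℂ] ℂ) (T : A →L[ℂ] A)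
    (hT1 : T 1 = 1)
    (hmix : ∀ (ψ : A →L[ℂ] ℂ) (x : A),
      Tendsto (fun n : ℕ =>
          (1 / (n : ℝ)) * ∑ k ∈ Finset.range n, ‖ψ ((T ^ k) x) - ψ 1 * φ x‖)
        atTop (nhds 0))
    (z : ℂ) (hz : ‖z‖ = 1) (hz1 : z ≠ 1)
    (f : A →L[ℂ] ℂ) (hf : ∀ x : A, f (T x) = z * f x) : f = 0 := by
  have hsemi : Function.Semiconj f T (z * ·) := hf
  have hf1 : f 1 = 0 := hsemi.apply_one_eq_zero_of_ne_one hT1 hz1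
  ext x
  have hterm (k : ℕ) : ‖f ((T ^ k) x) - f 1 * φ x‖ = ‖f x‖ := by
    rw [T.coe_pow_eq_iterate, hsemi.apply_iterate_eq_pow_mul, hf1, zero_mul, sub_zero, norm_mul,
      norm_pow, hz, one_pow, one_mul]
  have hconst : Tendsto (fun _ : ℕ => ‖f x‖) atTop (nhds 0) := by
    refine (hmix f x).congr' ?_
    filter_upwards [eventually_ne_atTop 0] with n hn
    simp only [hterm, one_div_mul_sum_range_const _ hn]
  simpa using tendsto_const_nhds_iff.1 hconst

/-- A strictly weak mixing system has no eigenfunctionals with eigenvalue on the unit circle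
other than 1. -/
theorem stmt3
    {A : Type*} [NormedRing A] [StarRing A] [CStarRing A] [NormedAlgebra ℂ A]
    [CompleteSpace A] [StarModule ℂ A] [PartialOrder A] [StarOrderedRing A]
    (φ : A →L[ℂ] ℂ) (T : A →L[ℂ] A)
    (hφ1 : φ 1 = 1) (hφpos : ∀ x : A, 0 ≤ φ (star x * x))
    (hT1 : T 1 = 1)
    (hTcp : ∀ (n : ℕ) (a b : Fin n → A),
      0 ≤ ∑ i, ∑ j, star (b i) * T (star (a i) * a j) * b j)
    (hinv : ∀ x : A, φ (T x) = φ x)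
    (hmix : ∀ (ψ : A →L[ℂ] ℂ) (x : A),
      Tendsto (fun n : ℕ =>
          (1 / (n : ℝ)) * ∑ k ∈ Finset.range n, ‖ψ ((T ^ k) x) - ψ 1 * φ x‖)
        atTop (nhds 0))
    (z : ℂ) (hz : ‖z‖ = 1) (hz1 : z ≠ 1)
    (f : A →L[ℂ] ℂ) (hf : ∀ x : A, f (T x) = z * f x) : f = 0 :=
  stmt3_general φ T hT1 hmix z hz hz1 f hf
end

section
/- Let T be a bounded linear map on a Banach space A, x ∈ A, and c ∈ A. Suppose that for every increasing sequence (k_n) of natural numbers with sup_n k_n/n < ∞, the averages (1/n)·∑_{m=0}^{n-1} T^{k_m}(x) converge in norm to c. Then for every bounded linear functional ψ on A, (1/n)·∑_{k=0}^{n-1} |ψ(T^k x) − ψ(c)| → 0 as n → ∞. -/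
/-!
Let `b` be a real sequence whose Cesàro means along every strictly increasing `k` with
`k n = O(n)` tend to `0`. If `p` has positive lower density, the enumeration `nth p` is such a
`k`, and the Cesàro means of `b` restricted to `p` are the means along `nth p` scaled by
`count p N / N ≤ 1`, so they tend to `0` as well. For `P = {b > 0}` the sets `P ∪ Even` and
`P ∪ Odd` have density at least `1/2` and their indicators add up to `1_P + 1`; hence the means
of `b⁺`, and of `|b| = 2 b⁺ - b`, tend to `0`. A complex sequence is handled through its real and
imaginary parts, and the theorem is this applied to `ψ (T ^ k x) - ψ c`.
-/

open Filter Topology Finset Nat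

section CesaroMean

variable {E : Type*} [AddCommGroup E] [Module ℝ E]

noncomputable def cesaroMean : (ℕ → E) →ₗ[ℝ] ℕ → E where
  toFun u n := (n : ℝ)⁻¹ • ∑ k ∈ range n, u k
  map_add' u v := by ext n; simp [sum_add_distrib]
  map_smul' a u := by ext n; simp [smul_sum, smul_comm a]

theorem cesaroMean_apply (u : ℕ → E) (n : ℕ) :
    cesaroMean u n = (n : ℝ)⁻¹ • ∑ k ∈ range n, u k :=
  rfl

theorem cesaroMean_const (c : E) {n : ℕ} (hn : n ≠ 0) : cesaroMean (fun _ => c) n = c := by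
  rw [cesaroMean_apply, sum_const, card_range, ← Nat.cast_smul_eq_nsmul ℝ, smul_smul,
    inv_mul_cancel₀ (Nat.cast_ne_zero.2 hn), one_smul]

theorem cesaroMean_comp_linearMap {F : Type*} [AddCommGroup F] [Module ℝ F] (f : E →ₗ[ℝ] F)
    (u : ℕ → E) : cesaroMean (f ∘ u) = f ∘ cesaroMean u := by
  ext n
  simp [cesaroMean_apply, map_sum]

theorem cesaroMean_mono : Monotone (cesaroMean : (ℕ → ℝ) →ₗ[ℝ] ℕ → ℝ) := fun _ _ huv _ =>
  smul_le_smul_of_nonneg_left (sum_le_sum fun k _ => huv k) (by positivity)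

theorem sum_range_count_nth {M : Type*} [AddCommMonoid M] (u : ℕ → M) (p : ℕ → Prop)
    [DecidablePred p] (N : ℕ) :
    ∑ m ∈ range (count p N), u (nth p m) = ∑ k ∈ range N, if p k then u k else 0 := by
  induction N with
  | zero => simp
  | succ n ih =>
    rw [sum_range_succ, count_succ, ← ih]
    by_cases hp : p n
    · simp [hp, sum_range_succ, nth_count hp]
    · simp [hp]

theorem cesaroMean_ite_eq_smul (u : ℕ → E) (p : ℕ → Prop) [DecidablePred p] (N : ℕ) :
    cesaroMean (fun k => if p k then u k else 0) N
      = ((count p N : ℝ) / N) • cesaroMean (u ∘ nth p) (count p N) := by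
  rcases eq_or_ne (count p N) 0 with h0 | h0
  · simp [cesaroMean_apply, ← sum_range_count_nth, h0]
  · have hN : (N : ℝ) ≠ 0 := by
      have := count_le p (n := N)
      norm_cast
      omega
    rw [cesaroMean_apply, cesaroMean_apply, ← sum_range_count_nth, smul_smul]
    congr 1
    field_simp

end CesaroMean

def IsLinearlyBoundedSubseq (k : ℕ → ℕ) : Prop :=
  StrictMono k ∧ ∃ C : ℝ, ∀ n, (k n : ℝ) ≤ C * (n + 1)

def HasPosLowerDensity (p : ℕ → Prop) [DecidablePred p] : Prop :=
  ∃ C : ℕ, ∀ N, N ≤ C * (count p N + 1)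

theorem tendsto_count_atTop {p : ℕ → Prop} [DecidablePred p] (hp : (Set.ofPred p).Infinite) :
    Tendsto (count p) atTop atTop :=
  tendsto_atTop_atTop.2 fun M => ⟨nth p M, fun _ hN =>
    (count_nth_of_infinite hp M).ge.trans (count_monotone p hN)⟩

namespace HasPosLowerDensity

variable {p q : ℕ → Prop} [DecidablePred p] [DecidablePred q]

theorem mono (hp : HasPosLowerDensity p) (hpq : ∀ k, p k → q k) : HasPosLowerDensity q := by
  obtain ⟨C, hC⟩ := hp
  exact ⟨C, fun N => (hC N).trans (by gcongr; exact hpq _)⟩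

theorem infinite (hp : HasPosLowerDensity p) : (Set.ofPred p).Infinite := by
  intro hfin
  obtain ⟨C, hC⟩ := hp
  have hle := hC (C * (#hfin.toFinset + 1) + 1)
  have : C * (count p (C * (#hfin.toFinset + 1) + 1) + 1) ≤ C * (#hfin.toFinset + 1) := by
    gcongr
    exact count_le_card hfin _
  omega

theorem isLinearlyBoundedSubseq_nth (hp : HasPosLowerDensity p) :
    IsLinearlyBoundedSubseq (nth p) := by
  have hinf := hp.infinite
  obtain ⟨C, hC⟩ := hp
  refine ⟨nth_strictMono hinf, C, fun n => ?_⟩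
  have := hC (nth p n)
  rw [count_nth_of_infinite hinf] at this
  exact_mod_cast this

end HasPosLowerDensity

theorem hasPosLowerDensity_even : HasPosLowerDensity Even := by
  have hcount (N : ℕ) : count Even N = (N + 1) / 2 := by
    induction N with
    | zero => rfl
    | succ n ih => rw [count_succ, ih]; split_ifs with h <;> rw [Nat.even_iff] at h <;> omega
  exact ⟨2, fun N => by rw [hcount]; omega⟩

theorem hasPosLowerDensity_odd : HasPosLowerDensity Odd := by
  have hcount (N : ℕ) : count Odd N = N / 2 := by
    induction N with
    | zero => rfl
    | succ n ih => rw [count_succ, ih]; split_ifs with h <;> rw [Nat.odd_iff] at h <;> omega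
  exact ⟨2, fun N => by rw [hcount]; omega⟩

def SubseqCesaroLimit {E : Type*} [AddCommGroup E] [Module ℝ E] [TopologicalSpace E]
    (u : ℕ → E) (c : E) : Prop :=
  ∀ k, IsLinearlyBoundedSubseq k → Tendsto (cesaroMean (u ∘ k)) atTop (𝓝 c)

namespace SubseqCesaroLimit

section Topological

variable {E F : Type*} [AddCommGroup E] [Module ℝ E] [TopologicalSpace E]
  [AddCommGroup F] [Module ℝ F] [TopologicalSpace F] {u : ℕ → E} {c : E}

theorem map (h : SubseqCesaroLimit u c) (f : E →L[ℝ] F) :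
    SubseqCesaroLimit (fun n => f (u n)) (f c) := by
  intro k hk
  change Tendsto (cesaroMean ((f : E →ₗ[ℝ] F) ∘ (u ∘ k))) _ _
  rw [cesaroMean_comp_linearMap]
  exact (f.continuous.tendsto c).comp (h k hk)

theorem sub_const [ContinuousSub E] (h : SubseqCesaroLimit u c) :
    SubseqCesaroLimit (fun n => u n - c) 0 := by
  intro k hk
  have hlim := (h k hk).sub_const c
  rw [sub_self] at hlim
  refine hlim.congr' ((eventually_ne_atTop 0).mono fun n hn => ?_)
  change _ = cesaroMean ((u ∘ k) - fun _ => c) n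
  rw [map_sub, Pi.sub_apply, cesaroMean_const c hn]

end Topological

theorem tendsto_cesaroMean_ite {E : Type*} [SeminormedAddCommGroup E] [NormedSpace ℝ E]
    {u : ℕ → E} (h : SubseqCesaroLimit u 0) {p : ℕ → Prop} [DecidablePred p]
    (hp : HasPosLowerDensity p) :
    Tendsto (cesaroMean fun k => if p k then u k else 0) atTop (𝓝 0) := by
  have hsub := (h _ hp.isLinearlyBoundedSubseq_nth).comp (tendsto_count_atTop hp.infinite)
  refine squeeze_zero_norm (fun N => ?_) (by simpa using hsub.norm)
  rw [cesaroMean_ite_eq_smul, norm_smul]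
  refine mul_le_of_le_one_left (norm_nonneg _) ?_
  rw [Real.norm_of_nonneg (by positivity)]
  exact div_le_one_of_le₀ (by exact_mod_cast count_le p) (Nat.cast_nonneg N)

theorem tendsto_cesaroMean_abs {b : ℕ → ℝ} (h : SubseqCesaroLimit b 0) :
    Tendsto (cesaroMean fun k => |b k|) atTop (𝓝 0) := by
  have habs : (fun k => |b k|) = (2 : ℝ) • (fun k => if 0 < b k ∨ Even k then b k else 0)
      + (2 : ℝ) • (fun k => if 0 < b k ∨ Odd k then b k else 0) - (3 : ℝ) • b := by
    ext k
    by_cases hk : Even k <;> by_cases hb : 0 < b k <;>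
      simp [hb, hk, ← Nat.not_even_iff_odd, abs_of_pos, abs_of_nonpos (not_lt.1 hb)] <;> ring
  have heven := h.tendsto_cesaroMean_ite
    (hasPosLowerDensity_even.mono (q := fun k => 0 < b k ∨ Even k) fun _ => Or.inr)
  have hodd := h.tendsto_cesaroMean_ite
    (hasPosLowerDensity_odd.mono (q := fun k => 0 < b k ∨ Odd k) fun _ => Or.inr)
  have hall : Tendsto (cesaroMean b) atTop (𝓝 0) :=
    h id ⟨strictMono_id, 1, fun n => by simp⟩
  have hlim := ((heven.const_smul (2 : ℝ)).add (hodd.const_smul (2 : ℝ))).sub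
    (hall.const_smul (3 : ℝ))
  simp only [smul_zero, add_zero, sub_zero] at hlim
  rw [habs, map_sub, map_add, map_smul, map_smul, map_smul]
  exact hlim

theorem tendsto_cesaroMean_norm {a : ℕ → ℂ} (h : SubseqCesaroLimit a 0) :
    Tendsto (cesaroMean fun k => ‖a k‖) atTop (𝓝 0) := by
  have hre : SubseqCesaroLimit (fun k => (a k).re) 0 := by
    simpa only [map_zero, Complex.reCLM_apply] using h.map Complex.reCLM
  have him : SubseqCesaroLimit (fun k => (a k).im) 0 := by
    simpa only [map_zero, Complex.imCLM_apply] using h.map Complex.imCLM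
  have hsum := hre.tendsto_cesaroMean_abs.add him.tendsto_cesaroMean_abs
  rw [add_zero] at hsum
  refine squeeze_zero (fun n => ?_) (fun n => ?_) hsum
  · exact smul_nonneg (by positivity) (sum_nonneg fun k _ => norm_nonneg (a k))
  · exact (cesaroMean_mono (fun k => Complex.norm_le_abs_re_add_abs_im (a k)) n).trans_eq
      (congrFun (map_add cesaroMean (fun k => |(a k).re|) fun k => |(a k).im|) n)

end SubseqCesaroLimit

theorem stmt8_general
    {A : Type*} [NormedAddCommGroup A] [NormedSpace ℂ A]
    (T : A →L[ℂ] A) (x c : A)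
    (h : ∀ k : ℕ → ℕ, StrictMono k → (∃ C : ℝ, ∀ n : ℕ, (k n : ℝ) ≤ C * (n + 1)) →
      Tendsto (fun n : ℕ => (1 / (n : ℂ)) • ∑ m ∈ Finset.range n, (T ^ (k m)) x)
        atTop (nhds c)) :
    ∀ ψ : A →L[ℂ] ℂ,
      Tendsto (fun n : ℕ =>
          (1 / (n : ℝ)) * ∑ k ∈ Finset.range n, ‖ψ ((T ^ k) x) - ψ c‖)
        atTop (nhds 0) := by
  intro ψ
  have horbit : SubseqCesaroLimit (fun k => (T ^ k) x) c := fun k hk => by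
    convert h k hk.1 hk.2 using 2 with n
    rw [cesaroMean_apply, one_div, ← Complex.ofReal_natCast, ← Complex.ofReal_inv,
      Complex.coe_smul]
    rfl
  have hψ := (horbit.map (ψ.restrictScalars ℝ)).sub_const.tendsto_cesaroMean_norm
  refine hψ.congr fun n => ?_
  simp [cesaroMean_apply, one_div]

/-- Blum–Hanson type: if for every increasing sequence (k_n) with sup k_n/n < ∞ the averages
(1/n)∑ T^{k_m} x converge in norm to c, then the Cesàro averages of |ψ(T^k x) − ψ(c)| tend
to 0 for every bounded functional ψ. -/
theorem stmt8
    {A : Type*} [NormedAddCommGroup A] [NormedSpace ℂ A] [CompleteSpace A]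
    (T : A →L[ℂ] A) (x c : A)
    (h : ∀ k : ℕ → ℕ, StrictMono k → (∃ C : ℝ, ∀ n : ℕ, (k n : ℝ) ≤ C * (n + 1)) →
      Tendsto (fun n : ℕ => (1 / (n : ℂ)) • ∑ m ∈ Finset.range n, (T ^ (k m)) x)
        atTop (nhds c)) :
    ∀ ψ : A →L[ℂ] ℂ,
      Tendsto (fun n : ℕ =>
          (1 / (n : ℝ)) * ∑ k ∈ Finset.range n, ‖ψ ((T ^ k) x) - ψ c‖)
        atTop (nhds 0) :=
  stmt8_general T x c h
end

section
/- Let (A, φ, T) and (B, φ₁, H) be state-preserving C*-dynamical systems, and suppose the tensor product system (A ⊗ B, φ ⊗ φ₁, T ⊗ H) is strictly weak mixing, i.e., (1/n)·∑_{k=0}^{n-1} |ω((T⊗H)^k(w)) − ω(1⊗1)·(φ⊗φ₁)(w)| → 0 for all w ∈ A ⊗ B and all ω ∈ (A ⊗ B)*. Then (A, φ, T) is strictly weak mixing. -/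
open Filter Finset ComplexOrder

/-!
Test the mixing of the tensor system on `x ⊗ 1` against the product functional `ψ ⊗ φ₁`.
Since `H 1 = 1` and `φ₁ 1 = 1`, the `k`-th summand `(ψ ⊗ φ₁)(S^k (x ⊗ 1)) - (ψ ⊗ φ₁)(1) Φ(x ⊗ 1)`
is exactly `ψ (T^k x) - ψ 1 φ x`, so the two Cesàro averages coincide term by term.
-/

theorem iterate_apply_of_semiconj {A B C : Type*} (tmul : A → B → C)
    {S : C → C} {T : A → A} {H : B → B} (hS : ∀ a x, S (tmul a x) = tmul (T a) (H x))
    (k : ℕ) (a : A) (x : B) : S^[k] (tmul a x) = tmul (T^[k] a) (H^[k] x) := by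
  have hsemi : Function.Semiconj (Function.uncurry tmul) (Prod.map T H) S :=
    fun p => (hS p.1 p.2).symm
  simpa [Prod.map_iterate] using (hsemi.iterate_right k (a, x)).symm

theorem stmt12_general
    {A : Type*} [NormedRing A] [NormedAlgebra ℂ A]
    {B : Type*} [NormedRing B] [NormedAlgebra ℂ B]
    {C : Type*} [NormedRing C] [NormedAlgebra ℂ C]
    (φ : A →L[ℂ] ℂ) (T : A →L[ℂ] A) (φ₁ : B →L[ℂ] ℂ) (H : B →L[ℂ] B)
    (hφ₁1 : φ₁ 1 = 1)
    (hH1 : H 1 = 1)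
    -- the data presenting the minimal C*-tensor product A ⊗ B
    (tmul : A →L[ℂ] B →L[ℂ] C) (Φ : C →L[ℂ] ℂ) (S : C →L[ℂ] C)
    (htmul_one : tmul 1 1 = 1)
    (hmin : ∀ (ψ : A →L[ℂ] ℂ) (ρ : B →L[ℂ] ℂ), ∃ Ω : C →L[ℂ] ℂ,
      ‖Ω‖ ≤ ‖ψ‖ * ‖ρ‖ ∧ ∀ (a : A) (x : B), Ω (tmul a x) = ψ a * ρ x)
    (hΦ : ∀ (a : A) (x : B), Φ (tmul a x) = φ a * φ₁ x)
    (hS : ∀ (a : A) (x : B), S (tmul a x) = tmul (T a) (H x))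
    -- strict weak mixing of the tensor product system
    (hmixC : ∀ (w : C) (Ω : C →L[ℂ] ℂ),
      Tendsto (fun n : ℕ =>
          (1 / (n : ℝ)) * ∑ k ∈ Finset.range n, ‖Ω ((S ^ k) w) - Ω 1 * Φ w‖)
        atTop (nhds 0)) :
    -- conclusion: (A, φ, T) is strictly weak mixing
    ∀ (x : A) (ψ : A →L[ℂ] ℂ),
      Tendsto (fun n : ℕ =>
          (1 / (n : ℝ)) * ∑ k ∈ Finset.range n, ‖ψ ((T ^ k) x) - ψ 1 * φ x‖)
        atTop (nhds 0) := by
  intro x ψ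
  obtain ⟨Ω, -, hΩ⟩ := hmin ψ φ₁
  have hΩ1 : Ω 1 = ψ 1 := by rw [← htmul_one, hΩ, hφ₁1, mul_one]
  have hΦx : Φ (tmul x 1) = φ x := by rw [hΦ, hφ₁1, mul_one]
  have hSk (k : ℕ) : (S ^ k) (tmul x 1) = tmul ((T ^ k) x) 1 := by
    simp only [FunLike.coe_pow_eq_iterate]
    rw [iterate_apply_of_semiconj (fun a y => tmul a y) hS, Function.iterate_fixed hH1]
  convert hmixC (tmul x 1) Ω using 4 with n k
  rw [hSk, hΩ, hφ₁1, mul_one, hΩ1, hΦx]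

/-- If the tensor product system (A ⊗ B, φ ⊗ φ₁, T ⊗ H) (the minimal C*-tensor product being
presented by the data `C`, `tmul`, `Φ`, `S`) is strictly weak mixing, then so is (A, φ, T). -/
theorem stmt12
    {A : Type*} [NormedRing A] [StarRing A] [CStarRing A] [NormedAlgebra ℂ A]
    [CompleteSpace A] [StarModule ℂ A] [PartialOrder A] [StarOrderedRing A]
    {B : Type*} [NormedRing B] [StarRing B] [CStarRing B] [NormedAlgebra ℂ B]
    [CompleteSpace B] [StarModule ℂ B] [PartialOrder B] [StarOrderedRing B]
    {C : Type*} [NormedRing C] [StarRing C] [CStarRing C] [NormedAlgebra ℂ C]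
    [CompleteSpace C] [StarModule ℂ C] [PartialOrder C] [StarOrderedRing C]
    (φ : A →L[ℂ] ℂ) (T : A →L[ℂ] A) (φ₁ : B →L[ℂ] ℂ) (H : B →L[ℂ] B)
    (hφ1 : φ 1 = 1) (hφpos : ∀ x : A, 0 ≤ φ (star x * x))
    (hT1 : T 1 = 1)
    (hTcp : ∀ (n : ℕ) (a b : Fin n → A),
      0 ≤ ∑ i, ∑ j, star (b i) * T (star (a i) * a j) * b j)
    (hinv : ∀ x : A, φ (T x) = φ x)
    (hφ₁1 : φ₁ 1 = 1) (hφ₁pos : ∀ y : B, 0 ≤ φ₁ (star y * y))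
    (hH1 : H 1 = 1)
    (hHcp : ∀ (n : ℕ) (a b : Fin n → B),
      0 ≤ ∑ i, ∑ j, star (b i) * H (star (a i) * a j) * b j)
    (hinv₁ : ∀ y : B, φ₁ (H y) = φ₁ y)
    -- the data presenting the minimal C*-tensor product A ⊗ B
    (tmul : A →L[ℂ] B →L[ℂ] C) (Φ : C →L[ℂ] ℂ) (S : C →L[ℂ] C)
    (htmul_one : tmul 1 1 = 1)
    (htmul_mul : ∀ (a b : A) (x y : B), tmul a x * tmul b y = tmul (a * b) (x * y))
    (htmul_star : ∀ (a : A) (x : B), star (tmul a x) = tmul (star a) (star x))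
    (htmul_norm : ∀ (a : A) (x : B), ‖tmul a x‖ = ‖a‖ * ‖x‖)
    (hdense : Dense (Submodule.span ℂ (Set.range fun p : A × B => tmul p.1 p.2) : Set C))
    (hmin : ∀ (ψ : A →L[ℂ] ℂ) (ρ : B →L[ℂ] ℂ), ∃ Ω : C →L[ℂ] ℂ,
      ‖Ω‖ ≤ ‖ψ‖ * ‖ρ‖ ∧ ∀ (a : A) (x : B), Ω (tmul a x) = ψ a * ρ x)
    (hΦ : ∀ (a : A) (x : B), Φ (tmul a x) = φ a * φ₁ x)
    (hS : ∀ (a : A) (x : B), S (tmul a x) = tmul (T a) (H x))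
    -- strict weak mixing of the tensor product system
    (hmixC : ∀ (w : C) (Ω : C →L[ℂ] ℂ),
      Tendsto (fun n : ℕ =>
          (1 / (n : ℝ)) * ∑ k ∈ Finset.range n, ‖Ω ((S ^ k) w) - Ω 1 * Φ w‖)
        atTop (nhds 0)) :
    -- conclusion: (A, φ, T) is strictly weak mixing
    ∀ (x : A) (ψ : A →L[ℂ] ℂ),
      Tendsto (fun n : ℕ =>
          (1 / (n : ℝ)) * ∑ k ∈ Finset.range n, ‖ψ ((T ^ k) x) - ψ 1 * φ x‖)
        atTop (nhds 0) :=
  stmt12_general φ T φ₁ H hφ₁1 hH1 tmul Φ S htmul_one hmin hΦ hS hmixC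
end

section
/- Let (A, φ, T) be a state-preserving C*-dynamical system such that the tensor square system (A ⊗ A, φ ⊗ φ, T ⊗ T) is uniquely ergodic in the sense that (1/n)·∑_{k=0}^{n-1} (T⊗T)^k(w) converges in norm to (φ⊗φ)(w)·1 for all w ∈ A ⊗ A. Then (A, φ, T) is strictly weak mixing: for every x ∈ A and every bounded linear functional ψ on A, (1/n)·∑_{k=0}^{n-1} |ψ(T^k x) − ψ(1)·φ(x)| → 0. -/
/-!
Centre `x` as `y = x - φ x • 1`, so that `ψ (T^k x) - ψ 1 * φ x = ψ (T^k y)` and `φ y = 0`.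
A positive unital map is star-preserving, so pairing `ψ` with `ψ^*(a) = conj (ψ (star a))` on the
tensor square gives `(ψ ⊗ ψ^*)((T ⊗ T)^k (y ⊗ star y)) = |ψ (T^k y)|²`. Unique ergodicity applied to
`y ⊗ star y`, whose `φ ⊗ φ`-value is `0`, makes the Cesàro means of `|ψ (T^k y)|²` tend to `0`, and
Cauchy–Schwarz passes this on to the Cesàro means of `|ψ (T^k y)|`.
-/

open Filter Finset ComplexOrder

theorem LinearMap.isSelfAdjoint_map_of_map_star_mul_self_nonneg {A B : Type*} [Ring A]
    [StarRing A] [Module ℂ A] [NonUnitalRing B] [PartialOrder B] [StarRing B] [StarOrderedRing B]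
    [Module ℂ B] [StarModule ℂ B] (T : A →ₗ[ℂ] B) (hT : ∀ a, 0 ≤ T (star a * a)) {a : A}
    (ha : IsSelfAdjoint a) : IsSelfAdjoint (T a) := by
  have hsq : ∀ b, IsSelfAdjoint (T (star b * b)) := fun b ↦ .of_nonneg (hT b)
  have htwo : (2 : ℂ) • T a = T (star (1 + a) * (1 + a)) - T (star 1 * 1) - T (star a * a) := by
    rw [← map_sub, ← map_sub, ← map_smul, star_add, star_one, ha.star_eq, two_smul]
    congr 1
    noncomm_ring
  have : T a = (2⁻¹ : ℂ) • ((2 : ℂ) • T a) := by rw [smul_smul]; norm_num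
  rw [this, htwo]
  exact .smul (by simp [IsSelfAdjoint]) (((hsq _).sub (hsq _)).sub (hsq _))

open scoped ComplexStarModule in
theorem LinearMap.map_star_of_isSelfAdjoint_map {A B : Type*} [AddCommGroup A] [Module ℂ A]
    [StarAddMonoid A] [StarModule ℂ A] [AddCommGroup B] [Module ℂ B] [StarAddMonoid B]
    [StarModule ℂ B] (T : A →ₗ[ℂ] B) (hT : ∀ a, IsSelfAdjoint a → IsSelfAdjoint (T a)) (a : A) :
    T (star a) = star (T a) := by
  conv_lhs => rw [← realPart_add_I_smul_imaginaryPart a]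
  conv_rhs => rw [← realPart_add_I_smul_imaginaryPart a]
  simp [star_add, star_smul, (hT _ (ℜ a).2).star_eq, (hT _ (ℑ a).2).star_eq, (ℜ a).2.star_eq,
    (ℑ a).2.star_eq]

theorem Function.iterate_apply_apply_of_apply_apply {α β γ : Type*} (f : α → β → γ) {S : γ → γ}
    {T : α → α} {U : β → β} (h : ∀ a b, S (f a b) = f (T a) (U b)) (k : ℕ) (a : α) (b : β) :
    S^[k] (f a b) = f (T^[k] a) (U^[k] b) := by
  induction k with
  | zero => rfl
  | succ k ih => simp only [iterate_succ_apply', ih, h]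

theorem tendsto_cesaro_norm_of_tendsto_cesaro_norm_sq {E : Type*} [SeminormedAddGroup E]
    {f : ℕ → E} (h : Tendsto (fun n : ℕ ↦ (1 / (n : ℝ)) * ∑ k ∈ range n, ‖f k‖ ^ 2) atTop (nhds 0)) :
    Tendsto (fun n : ℕ ↦ (1 / (n : ℝ)) * ∑ k ∈ range n, ‖f k‖) atTop (nhds 0) := by
  have hsqrt := (Real.continuous_sqrt.tendsto 0).comp h
  rw [Real.sqrt_zero] at hsqrt
  refine squeeze_zero (fun n ↦ by positivity) (fun n ↦ Real.le_sqrt_of_sq_le ?_) hsqrt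
  simpa [div_eq_inv_mul] using sum_div_card_sq_le_sum_sq_div_card (s := range n) (f := (‖f ·‖))

theorem stmt13_general
    {A : Type*} [NormedRing A] [StarRing A] [CStarRing A] [NormedAlgebra ℂ A]
    [StarModule ℂ A] [PartialOrder A] [StarOrderedRing A]
    {C : Type*} [NormedRing C] [NormedAlgebra ℂ C]
    (φ : A →L[ℂ] ℂ) (T : A →L[ℂ] A)
    (hφ1 : φ 1 = 1)
    (hT1 : T 1 = 1)
    (hTcp : ∀ (n : ℕ) (a b : Fin n → A),
      0 ≤ ∑ i, ∑ j, star (b i) * T (star (a i) * a j) * b j)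
    -- the data presenting the minimal C*-tensor product A ⊗ A
    (tmul : A →L[ℂ] A →L[ℂ] C) (Φ : C →L[ℂ] ℂ) (S : C →L[ℂ] C)
    (hmin : ∀ ψ ρ : A →L[ℂ] ℂ, ∃ Ω : C →L[ℂ] ℂ,
      ‖Ω‖ ≤ ‖ψ‖ * ‖ρ‖ ∧ ∀ a x : A, Ω (tmul a x) = ψ a * ρ x)
    (hΦ : ∀ a x : A, Φ (tmul a x) = φ a * φ x)
    (hS : ∀ a x : A, S (tmul a x) = tmul (T a) (T x))
    -- unique ergodicity of the tensor square system
    (hue : ∀ w : C,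
      Tendsto (fun n : ℕ => (1 / (n : ℂ)) • ∑ k ∈ Finset.range n, (S ^ k) w)
        atTop (nhds (Φ w • (1 : C)))) :
    -- conclusion: (A, φ, T) is strictly weak mixing
    ∀ (x : A) (ψ : A →L[ℂ] ℂ),
      Tendsto (fun n : ℕ =>
          (1 / (n : ℝ)) * ∑ k ∈ Finset.range n, ‖ψ ((T ^ k) x) - ψ 1 * φ x‖)
        atTop (nhds 0) := by
  intro x ψ
  have hTstar : Function.Commute T star :=
    (T : A →ₗ[ℂ] A).map_star_of_isSelfAdjoint_map fun _ ↦
      (T : A →ₗ[ℂ] A).isSelfAdjoint_map_of_map_star_mul_self_nonneg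
        fun a ↦ by simpa using hTcp 1 (fun _ ↦ a) (fun _ ↦ 1)
  set y := x - φ x • 1
  have hφy : φ y = 0 := by simp [y, hφ1]
  have hy : ∀ k, ψ ((T ^ k) x) - ψ 1 * φ x = ψ ((T ^ k) y) := fun k ↦ by
    have hTk1 : (T ^ k) 1 = 1 := by rw [FunLike.coe_pow_eq_iterate, Function.iterate_fixed hT1]
    rw [map_sub, map_smul, hTk1, map_sub, map_smul, smul_eq_mul, mul_comm]
  obtain ⟨Ω, -, hΩ⟩ := hmin ψ (star (WithConv.toConv ψ)).ofConv
  have hΩS : ∀ k, Ω ((S ^ k) (tmul y (star y))) = ((‖ψ ((T ^ k) y)‖ ^ 2 : ℝ) : ℂ) := fun k ↦ by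
    simp only [FunLike.coe_pow_eq_iterate, Function.iterate_apply_apply_of_apply_apply _ hS, hΩ,
      (hTstar.iterate_left k).eq]
    simp [Complex.mul_conj']
  have hlim := (Ω.continuous.tendsto _).comp (hue (tmul y (star y)))
  simp only [Function.comp_def, map_smul, map_sum, hΩS, hΦ, hφy, zero_mul, zero_smul] at hlim
  simp_rw [hy]
  refine tendsto_cesaro_norm_of_tendsto_cesaro_norm_sq ?_
  rw [← tendsto_ofReal_iff]
  simpa using hlim

/-- If the tensor square system (A ⊗ A, φ ⊗ φ, T ⊗ T) (the minimal C*-tensor product being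
presented by the data `C`, `tmul`, `Φ`, `S`) is uniquely ergodic, then (A, φ, T) is strictly
weak mixing. -/
theorem stmt13
    {A : Type*} [NormedRing A] [StarRing A] [CStarRing A] [NormedAlgebra ℂ A]
    [CompleteSpace A] [StarModule ℂ A] [PartialOrder A] [StarOrderedRing A]
    {C : Type*} [NormedRing C] [StarRing C] [CStarRing C] [NormedAlgebra ℂ C]
    [CompleteSpace C] [StarModule ℂ C] [PartialOrder C] [StarOrderedRing C]
    (φ : A →L[ℂ] ℂ) (T : A →L[ℂ] A)
    (hφ1 : φ 1 = 1) (hφpos : ∀ x : A, 0 ≤ φ (star x * x))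
    (hT1 : T 1 = 1)
    (hTcp : ∀ (n : ℕ) (a b : Fin n → A),
      0 ≤ ∑ i, ∑ j, star (b i) * T (star (a i) * a j) * b j)
    (hinv : ∀ x : A, φ (T x) = φ x)
    -- the data presenting the minimal C*-tensor product A ⊗ A
    (tmul : A →L[ℂ] A →L[ℂ] C) (Φ : C →L[ℂ] ℂ) (S : C →L[ℂ] C)
    (htmul_one : tmul 1 1 = 1)
    (htmul_mul : ∀ a b x y : A, tmul a x * tmul b y = tmul (a * b) (x * y))
    (htmul_star : ∀ a x : A, star (tmul a x) = tmul (star a) (star x))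
    (htmul_norm : ∀ a x : A, ‖tmul a x‖ = ‖a‖ * ‖x‖)
    (hdense : Dense (Submodule.span ℂ (Set.range fun p : A × A => tmul p.1 p.2) : Set C))
    (hmin : ∀ ψ ρ : A →L[ℂ] ℂ, ∃ Ω : C →L[ℂ] ℂ,
      ‖Ω‖ ≤ ‖ψ‖ * ‖ρ‖ ∧ ∀ a x : A, Ω (tmul a x) = ψ a * ρ x)
    (hΦ : ∀ a x : A, Φ (tmul a x) = φ a * φ x)
    (hS : ∀ a x : A, S (tmul a x) = tmul (T a) (T x))
    -- unique ergodicity of the tensor square system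
    (hue : ∀ w : C,
      Tendsto (fun n : ℕ => (1 / (n : ℂ)) • ∑ k ∈ Finset.range n, (S ^ k) w)
        atTop (nhds (Φ w • (1 : C)))) :
    -- conclusion: (A, φ, T) is strictly weak mixing
    ∀ (x : A) (ψ : A →L[ℂ] ℂ),
      Tendsto (fun n : ℕ =>
          (1 / (n : ℝ)) * ∑ k ∈ Finset.range n, ‖ψ ((T ^ k) x) - ψ 1 * φ x‖)
        atTop (nhds 0) :=
  stmt13_general φ T hφ1 hT1 hTcp tmul Φ S hmin hΦ hS hue
end

section
/- Let (A, φ, T) be a state-preserving C*-dynamical system such that for every state-preserving uniquely ergodic C*-dynamical system (B, φ₁, H), the tensor product system (A ⊗ B, φ ⊗ φ₁, T ⊗ H) is uniquely ergodic. Then (A, φ, T) is strictly weak mixing. -/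
/-!
Applying the hypothesis to the trivial system on `ℂ` (where `A ⊗ ℂ = A`) shows that `(A, φ, T)` is
uniquely ergodic, and applying it once more with `B = A` shows that `A ⊗ A` is uniquely ergodic.
Fix `x` and `ψ`, and put `z k = ψ (T^k x)`, `c = ψ 1 * φ x`. The Cesàro means of `z` tend to `c`
by unique ergodicity of `A`. Since `T` is positive it commutes with `star`, so
`(T ⊗ T)^k (x ⊗ x⋆) = T^k x ⊗ (T^k x)⋆`, and testing unique ergodicity of `A ⊗ A` against the
product of `ψ` and `a ↦ conj (ψ a⋆)` shows that the Cesàro means of `|z k|²` tend to `|c|²`.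
Expanding `|z k - c|²`, its Cesàro means tend to `0`, and by Cauchy–Schwarz so do those of
`|z k - c|`.
-/

open Filter Finset ComplexOrder ComplexConjugate Topology

universe u v

section MapStar

variable {A B F : Type*} [Ring A] [StarRing A] [AddCommGroup B] [StarAddMonoid B] [FunLike F A B]

lemma isSelfAdjoint_map_add_map_star [AddMonoidHomClass F A B] {f : F}
    (hf : ∀ a, IsSelfAdjoint (f (star a * a))) (a : A) : IsSelfAdjoint (f a + f (star a)) := by
  have h : f a + f (star a) = f (star (a + 1) * (a + 1)) - f (star a * a) - f (star 1 * 1) := by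
    simp only [star_add, star_one, add_mul, mul_add, one_mul, mul_one, map_add]
    abel
  rw [h]
  exact ((hf _).sub (hf a)).sub (hf 1)

/-- Polarization: self-adjointness of `f a + f (star a)` for `a` and for `I • a` pins down
`f (star a)`. -/
lemma map_star_of_isSelfAdjoint_map_star_mul_self [Module ℂ A] [StarModule ℂ A] [Module ℂ B]
    [StarModule ℂ B] [LinearMapClass F ℂ A B] {f : F}
    (hf : ∀ a, IsSelfAdjoint (f (star a * a))) (a : A) : f (star a) = star (f a) := by
  have h₁ := (isSelfAdjoint_map_add_map_star hf a).star_eq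
  have h₂ := (isSelfAdjoint_map_add_map_star hf (Complex.I • a)).star_eq
  simp only [star_add, star_smul, map_smul, Complex.star_def, Complex.conj_I] at h₁ h₂
  linear_combination (norm := skip) (-1 / 2 : ℂ) • h₁ - (Complex.I / 2) • h₂
  match_scalars <;> ring_nf <;> simp [Complex.I_sq]

end MapStar

namespace ULift

variable {R : Type*}

instance [Star R] : Star (ULift.{v} R) := ⟨fun x => up (star x.down)⟩

@[simp] lemma down_star [Star R] (x : ULift.{v} R) : (star x).down = star x.down := rfl

instance [NonUnitalNonAssocSemiring R] [StarRing R] : StarRing (ULift.{v} R) where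
  star_involutive x := congrArg up (star_star x.down)
  star_mul x y := congrArg up (star_mul x.down y.down)
  star_add x y := congrArg up (star_add x.down y.down)

instance {S : Type*} [SMul S R] [Star S] [Star R] [StarModule S R] :
    StarModule S (ULift.{v} R) where
  star_smul c x := congrArg up (star_smul c x.down)

instance [NonUnitalNormedRing R] [StarRing R] [CStarRing R] : CStarRing (ULift.{v} R) where
  norm_mul_self_le x := CStarRing.norm_mul_self_le x.down

instance : StarOrderedRing (ULift.{v} ℂ) :=
  StarOrderedRing.of_nonneg_iff' (fun h z => add_le_add_right (α := ℂ) h z.down) fun x => by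
    change 0 ≤ x.down ↔ _
    rw [CStarAlgebra.nonneg_iff_eq_star_mul_self]
    exact ⟨fun ⟨s, hs⟩ => ⟨up s, ext _ _ hs⟩, fun ⟨s, hs⟩ => ⟨s.down, congrArg down hs⟩⟩

noncomputable def downCLM : ULift.{v} ℂ →L[ℂ] ℂ :=
  (ContinuousLinearEquiv.ulift : ULift.{v} ℂ ≃L[ℂ] ℂ).toContinuousLinearMap

@[simp] lemma downCLM_apply (z : ULift.{v} ℂ) : downCLM z = z.down := rfl

end ULift

section ScalarTensor

variable {A : Type*} [NormedRing A] [NormedAlgebra ℂ A]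

variable (A) in
/-- `A ⊗ ℂ = A`, with `ℂ` lifted to the universe of `A` so that it can play the role of `B`. -/
noncomputable def scalarTMul : A →L[ℂ] ULift.{v} ℂ →L[ℂ] A :=
  (ContinuousLinearMap.lsmul ℂ ℂ).flip.bilinearComp (.id ℂ A) ULift.downCLM

@[simp] lemma scalarTMul_apply (a : A) (z : ULift.{v} ℂ) : scalarTMul A a z = z.down • a := rfl

lemma scalarTMul_one : scalarTMul A 1 (1 : ULift.{v} ℂ) = 1 := by simp

lemma scalarTMul_mul (a b : A) (x y : ULift.{v} ℂ) :
    scalarTMul A a x * scalarTMul A b y = scalarTMul A (a * b) (x * y) := by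
  simp [smul_smul, mul_comm]

lemma norm_scalarTMul (a : A) (x : ULift.{v} ℂ) : ‖scalarTMul A a x‖ = ‖a‖ * ‖x‖ := by
  simp [norm_smul, mul_comm]

lemma span_range_scalarTMul :
    Submodule.span ℂ (Set.range fun p : A × ULift.{v} ℂ => scalarTMul A p.1 p.2) = ⊤ :=
  Submodule.eq_top_iff'.mpr fun a => Submodule.subset_span ⟨(a, 1), by simp⟩

lemma exists_eq_mul_scalarTMul (ψ : A →L[ℂ] ℂ) (ρ : ULift.{v} ℂ →L[ℂ] ℂ) :
    ∃ Ω : A →L[ℂ] ℂ, ‖Ω‖ ≤ ‖ψ‖ * ‖ρ‖ ∧ ∀ a x, Ω (scalarTMul A a x) = ψ a * ρ x := by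
  refine ⟨ρ 1 • ψ, ?_, fun a x => ?_⟩
  · calc ‖ρ 1 • ψ‖ ≤ ‖ρ 1‖ * ‖ψ‖ := ContinuousLinearMap.opNorm_smul_le _ _
      _ ≤ ‖ρ‖ * ‖ψ‖ := by gcongr; simpa using ρ.le_opNorm 1
      _ = ‖ψ‖ * ‖ρ‖ := mul_comm _ _
  · have hx : x = x.down • 1 := ULift.ext _ _ (by simp)
    rw [hx]
    simp [mul_comm, mul_left_comm]

lemma star_scalarTMul [StarRing A] [StarModule ℂ A] (a : A) (x : ULift.{v} ℂ) :
    star (scalarTMul A a x) = scalarTMul A (star a) (star x) := by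
  simp

end ScalarTensor

section UniqueErgodicity

variable {A : Type*} [AddCommMonoid A] [One A] [Module ℂ A] [TopologicalSpace A]

def IsUniquelyErgodic (φ : A →L[ℂ] ℂ) (T : A →L[ℂ] A) : Prop :=
  ∀ y, Tendsto (fun n : ℕ => (1 / (n : ℂ)) • ∑ k ∈ range n, (T ^ k) y) atTop (𝓝 (φ y • (1 : A)))

lemma IsUniquelyErgodic.tendsto_cesaro_apply {φ : A →L[ℂ] ℂ} {T : A →L[ℂ] A}
    (hT : IsUniquelyErgodic φ T) (ω : A →L[ℂ] ℂ) (x : A) :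
    Tendsto (fun n : ℕ => (1 / (n : ℂ)) * ∑ k ∈ range n, ω ((T ^ k) x)) atTop
      (𝓝 (φ x * ω 1)) := by
  simpa [Function.comp_def] using (ω.continuous.tendsto _).comp (hT x)

end UniqueErgodicity

lemma isUniquelyErgodic_downCLM_one :
    IsUniquelyErgodic ULift.downCLM.{v} (1 : ULift.{v} ℂ →L[ℂ] ULift.{v} ℂ) := fun y => by
  refine tendsto_const_nhds.congr' ?_
  filter_upwards [eventually_ne_atTop 0] with n hn
  ext
  simp [hn]

lemma sum_sum_star_mul_star_mul_nonneg {R ι : Type*} [CommSemiring R] [StarRing R]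
    [PartialOrder R] [StarOrderedRing R] (s : Finset ι) (a b : ι → R) :
    0 ≤ ∑ i ∈ s, ∑ j ∈ s, star (b i) * (star (a i) * a j) * b j := by
  convert star_mul_self_nonneg (∑ i ∈ s, a i * b i) using 1
  simp only [star_sum, sum_mul_sum, star_mul]
  exact sum_congr rfl fun i _ => sum_congr rfl fun j _ => by ring

lemma pow_apply_tmul_of_apply_tmul {R A B C : Type*} [Semiring R]
    [AddCommMonoid A] [Module R A] [TopologicalSpace A]
    [AddCommMonoid B] [Module R B] [TopologicalSpace B]
    [AddCommMonoid C] [Module R C] [TopologicalSpace C]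
    {tmul : A → B → C} {S : C →L[R] C} {T : A →L[R] A} {H : B →L[R] B}
    (hS : ∀ a x, S (tmul a x) = tmul (T a) (H x)) (k : ℕ) (a : A) (x : B) :
    (S ^ k) (tmul a x) = tmul ((T ^ k) a) ((H ^ k) x) := by
  simp only [FunLike.coe_pow_eq_iterate]
  induction k with
  | zero => rfl
  | succ k ih => simp only [Function.iterate_succ_apply', ih, hS]

lemma tendsto_cesaro_of_tendsto_cesaro_sq {f : ℕ → ℝ} (hf : ∀ k, 0 ≤ f k)
    (h : Tendsto (fun n : ℕ => (1 / (n : ℝ)) * ∑ k ∈ range n, f k ^ 2) atTop (𝓝 0)) :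
    Tendsto (fun n : ℕ => (1 / (n : ℝ)) * ∑ k ∈ range n, f k) atTop (𝓝 0) := by
  have hsqrt := (Real.continuous_sqrt.tendsto 0).comp h
  rw [Real.sqrt_zero] at hsqrt
  refine tendsto_of_tendsto_of_tendsto_of_le_of_le tendsto_const_nhds hsqrt
    (fun n => mul_nonneg (by positivity) (sum_nonneg fun k _ => hf k)) fun n => ?_
  have := sum_div_card_sq_le_sum_sq_div_card (s := range n) (f := f)
  rw [card_range] at this
  simpa only [Function.comp_apply, one_div_mul_eq_div] using Real.le_sqrt_of_sq_le this

lemma tendsto_cesaro_sq_norm_sub {z : ℕ → ℂ} {c : ℂ}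
    (h₁ : Tendsto (fun n : ℕ => (1 / (n : ℂ)) * ∑ k ∈ range n, z k) atTop (𝓝 c))
    (h₂ : Tendsto (fun n : ℕ => (1 / (n : ℂ)) * ∑ k ∈ range n, z k * conj (z k)) atTop
      (𝓝 (c * conj c))) :
    Tendsto (fun n : ℕ => (1 / (n : ℝ)) * ∑ k ∈ range n, ‖z k - c‖ ^ 2) atTop (𝓝 0) := by
  rw [← tendsto_ofReal_iff, Complex.ofReal_zero]
  have h₁' := (Complex.continuous_conj.tendsto c).comp h₁
  have key := ((h₂.sub (h₁.const_mul (conj c))).sub (h₁'.const_mul c)).add_const (c * conj c)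
  rw [show c * conj c - conj c * c - c * conj c + c * conj c = 0 by ring] at key
  refine key.congr' ?_
  filter_upwards [eventually_ne_atTop 0] with n hn
  push_cast
  simp only [Function.comp_apply, map_mul, map_sum, map_div₀, map_one, Complex.conj_natCast,
    ← Complex.mul_conj', map_sub, mul_sub, sub_mul, sum_sub_distrib, sum_const, card_range,
    nsmul_eq_mul, mul_sum]
  field_simp
  ring

theorem tendsto_cesaro_norm_sub {z : ℕ → ℂ} {c : ℂ}
    (h₁ : Tendsto (fun n : ℕ => (1 / (n : ℂ)) * ∑ k ∈ range n, z k) atTop (𝓝 c))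
    (h₂ : Tendsto (fun n : ℕ => (1 / (n : ℂ)) * ∑ k ∈ range n, z k * conj (z k)) atTop
      (𝓝 (c * conj c))) :
    Tendsto (fun n : ℕ => (1 / (n : ℝ)) * ∑ k ∈ range n, ‖z k - c‖) atTop (𝓝 0) :=
  tendsto_cesaro_of_tendsto_cesaro_sq (fun _ => norm_nonneg _) (tendsto_cesaro_sq_norm_sub h₁ h₂)

/-- If for every state-preserving uniquely ergodic C*-dynamical system (B, φ₁, H) the tensor
product system (A ⊗ B, φ ⊗ φ₁, T ⊗ H) (minimal C*-tensor products being presented by data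
`C`, `tmul`, `Φ`, `S`) is uniquely ergodic, then (A, φ, T) is strictly weak mixing.
A concrete presentation (C₀, tmul₀, Φ₀, S₀) of the minimal tensor square A ⊗ A (which always
exists) is supplied as data. -/
theorem stmt14
    {A : Type u} [NormedRing A] [StarRing A] [CStarRing A] [NormedAlgebra ℂ A]
    [CompleteSpace A] [StarModule ℂ A] [PartialOrder A] [StarOrderedRing A]
    (φ : A →L[ℂ] ℂ) (T : A →L[ℂ] A)
    (hφ1 : φ 1 = 1) (hφpos : ∀ x : A, 0 ≤ φ (star x * x))
    (hT1 : T 1 = 1)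
    (hTcp : ∀ (n : ℕ) (a b : Fin n → A),
      0 ≤ ∑ i, ∑ j, star (b i) * T (star (a i) * a j) * b j)
    (hinv : ∀ x : A, φ (T x) = φ x)
    -- the main hypothesis: for every state-preserving uniquely ergodic system (B, φ₁, H),
    -- every presentation of the minimal tensor product system (A ⊗ B, φ ⊗ φ₁, T ⊗ H)
    -- is uniquely ergodic
    (h : ∀ (B : Type u) [NormedRing B] [StarRing B] [CStarRing B] [NormedAlgebra ℂ B]
        [CompleteSpace B] [StarModule ℂ B] [PartialOrder B] [StarOrderedRing B]
        (φ₁ : B →L[ℂ] ℂ) (H : B →L[ℂ] B),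
      φ₁ 1 = 1 → (∀ y : B, 0 ≤ φ₁ (star y * y)) → H 1 = 1 →
      (∀ (n : ℕ) (a b : Fin n → B),
        0 ≤ ∑ i, ∑ j, star (b i) * H (star (a i) * a j) * b j) →
      (∀ y : B, φ₁ (H y) = φ₁ y) →
      (∀ y : B, Tendsto (fun n : ℕ => (1 / (n : ℂ)) • ∑ k ∈ Finset.range n, (H ^ k) y)
        atTop (nhds (φ₁ y • (1 : B)))) →
      ∀ (C : Type u) [NormedRing C] [StarRing C] [CStarRing C] [NormedAlgebra ℂ C]
        [CompleteSpace C] [StarModule ℂ C] [PartialOrder C] [StarOrderedRing C]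
        (tmul : A →L[ℂ] B →L[ℂ] C) (Φ : C →L[ℂ] ℂ) (S : C →L[ℂ] C),
      tmul 1 1 = 1 →
      (∀ (a b : A) (x y : B), tmul a x * tmul b y = tmul (a * b) (x * y)) →
      (∀ (a : A) (x : B), star (tmul a x) = tmul (star a) (star x)) →
      (∀ (a : A) (x : B), ‖tmul a x‖ = ‖a‖ * ‖x‖) →
      Dense (Submodule.span ℂ (Set.range fun p : A × B => tmul p.1 p.2) : Set C) →
      (∀ (ψ : A →L[ℂ] ℂ) (ρ : B →L[ℂ] ℂ), ∃ Ω : C →L[ℂ] ℂ,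
        ‖Ω‖ ≤ ‖ψ‖ * ‖ρ‖ ∧ ∀ (a : A) (x : B), Ω (tmul a x) = ψ a * ρ x) →
      (∀ (a : A) (x : B), Φ (tmul a x) = φ a * φ₁ x) →
      (∀ (a : A) (x : B), S (tmul a x) = tmul (T a) (H x)) →
      ∀ w : C, Tendsto (fun n : ℕ => (1 / (n : ℂ)) • ∑ k ∈ Finset.range n, (S ^ k) w)
        atTop (nhds (Φ w • (1 : C))))
    -- a concrete presentation of the minimal C*-tensor product A ⊗ A
    {C₀ : Type u} [NormedRing C₀] [StarRing C₀] [CStarRing C₀] [NormedAlgebra ℂ C₀]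
    [CompleteSpace C₀] [StarModule ℂ C₀] [PartialOrder C₀] [StarOrderedRing C₀]
    (tmul₀ : A →L[ℂ] A →L[ℂ] C₀) (Φ₀ : C₀ →L[ℂ] ℂ) (S₀ : C₀ →L[ℂ] C₀)
    (h₀one : tmul₀ 1 1 = 1)
    (h₀mul : ∀ a b x y : A, tmul₀ a x * tmul₀ b y = tmul₀ (a * b) (x * y))
    (h₀star : ∀ a x : A, star (tmul₀ a x) = tmul₀ (star a) (star x))
    (h₀norm : ∀ a x : A, ‖tmul₀ a x‖ = ‖a‖ * ‖x‖)
    (h₀dense : Dense (Submodule.span ℂ (Set.range fun p : A × A => tmul₀ p.1 p.2) : Set C₀))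
    (h₀min : ∀ ψ ρ : A →L[ℂ] ℂ, ∃ Ω : C₀ →L[ℂ] ℂ,
      ‖Ω‖ ≤ ‖ψ‖ * ‖ρ‖ ∧ ∀ a x : A, Ω (tmul₀ a x) = ψ a * ρ x)
    (h₀Φ : ∀ a x : A, Φ₀ (tmul₀ a x) = φ a * φ x)
    (h₀S : ∀ a x : A, S₀ (tmul₀ a x) = tmul₀ (T a) (T x)) :
    -- conclusion: (A, φ, T) is strictly weak mixing
    ∀ (x : A) (ψ : A →L[ℂ] ℂ),
      Tendsto (fun n : ℕ =>
          (1 / (n : ℝ)) * ∑ k ∈ Finset.range n, ‖ψ ((T ^ k) x) - ψ 1 * φ x‖)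
        atTop (nhds 0) := by
  have hφstar : ∀ a : A, φ (star a) = conj (φ a) :=
    map_star_of_isSelfAdjoint_map_star_mul_self fun a => .of_nonneg (hφpos a)
  have hTstar : Function.Commute T star :=
    map_star_of_isSelfAdjoint_map_star_mul_self fun a =>
      .of_nonneg (by simpa using hTcp 1 (fun _ => a) (fun _ => 1))
  have hA : IsUniquelyErgodic φ T :=
    h (ULift ℂ) ULift.downCLM 1 rfl (fun y => star_mul_self_nonneg y.down) rfl
      (fun n a b => by simpa using sum_sum_star_mul_star_mul_nonneg univ a b) (fun _ => rfl)
      isUniquelyErgodic_downCLM_one A (scalarTMul A) φ T scalarTMul_one scalarTMul_mul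
      star_scalarTMul norm_scalarTMul (by rw [span_range_scalarTMul]; exact dense_univ)
      exists_eq_mul_scalarTMul (fun a x => by simp [mul_comm]) (fun a x => by simp)
  have hAA : IsUniquelyErgodic Φ₀ S₀ :=
    h A φ T hφ1 hφpos hT1 hTcp hinv hA C₀ tmul₀ Φ₀ S₀ h₀one h₀mul h₀star h₀norm h₀dense h₀min
      h₀Φ h₀S
  intro x ψ
  obtain ⟨Ω, -, hΩ⟩ := h₀min ψ (star (WithConv.toConv ψ)).ofConv
  have hΩS (k : ℕ) :
      Ω ((S₀ ^ k) (tmul₀ x (star x))) = ψ ((T ^ k) x) * conj (ψ ((T ^ k) x)) := by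
    rw [pow_apply_tmul_of_apply_tmul h₀S, hΩ, FunLike.coe_pow_eq_iterate, hTstar.iterate_left k x]
    simp
  refine tendsto_cesaro_norm_sub ?_ ?_
  · simpa [mul_comm] using hA.tendsto_cesaro_apply ψ x
  · have hlim : Φ₀ (tmul₀ x (star x)) * Ω 1 = ψ 1 * φ x * conj (ψ 1 * φ x) := by
      rw [h₀Φ, hφstar, ← h₀one, hΩ]
      simp only [ContinuousLinearMap.intrinsicStar_apply, star_one, RCLike.star_def, map_mul]
      ring
    simpa only [hΩS, hlim] using hAA.tendsto_cesaro_apply Ω (tmul₀ x (star x))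
end

section
/- Let α ∈ [0,1) be irrational, a = exp(2πiα), and m a fixed positive integer. Then for every strictly weak mixing C*-dynamical system (A, φ, T) and every x ∈ A with φ(x) arbitrary, the weighted averages (1/n)·∑_{k=0}^{n-1} a^{km}·T^k(x) converge in norm to 0. -/
/-! With `c = a ^ m`, the averages are the Cesàro averages of the operator `c • T`, which is a
contraction: a unital completely positive map satisfies the Kadison–Schwarz inequality
`T(z)* T(z) ≤ T(z* z)`, hence `‖T‖ ≤ 1`. For a contraction `S`, the averages vanish in the limit on
the closure of the range of `S - 1`, so by Hahn–Banach they tend to `0` at `x` as soon as every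
`S`-invariant functional `g` kills `x`. Such a `g` satisfies `c * g (T z) = g z`; since `c ≠ 1`
(`α` is irrational) this gives `g 1 = 0`, and since `‖c‖ = 1` it gives `‖g (T^k x)‖ = ‖g x‖`.
Strict weak mixing applied to `ψ = g` then says that the constant `‖g x‖` has Cesàro mean `0`. -/

open Filter Finset Real ComplexOrder

open scoped Topology ComplexStarModule

lemma norm_cexp_two_pi_mul_I (α : ℝ) : ‖Complex.exp (2 * π * α * Complex.I)‖ = 1 := by
  exact_mod_cast Complex.norm_exp_ofReal_mul_I (2 * π * α)

lemma Irrational.cexp_two_pi_mul_I_pow_ne_one {α : ℝ} (h : Irrational α) {m : ℕ} (hm : m ≠ 0) :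
    Complex.exp (2 * π * α * Complex.I) ^ m ≠ 1 := by
  rw [← Complex.exp_nat_mul]
  intro hexp
  obtain ⟨n, hn⟩ := Complex.exp_eq_one_iff.mp hexp
  refine (h.natCast_mul hm).ne_int n ?_
  have h2πI : 2 * (π : ℂ) * Complex.I ≠ 0 := by simp [Real.pi_ne_zero, Complex.I_ne_zero]
  have hmn : ((m * α : ℝ) : ℂ) = n := mul_right_cancel₀ h2πI (by push_cast; linear_combination hn)
  exact_mod_cast hmn

section MeanErgodic

variable {𝕜 E : Type*} [RCLike 𝕜] [NormedAddCommGroup E] [NormedSpace 𝕜 E]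

theorem Submodule.exists_dual_eq_zero_ne_zero_of_notMem_topologicalClosure
    (p : Submodule 𝕜 E) {x : E} (hx : x ∉ p.topologicalClosure) :
    ∃ g : StrongDual 𝕜 E, (∀ y ∈ p, g y = 0) ∧ g x ≠ 0 := by
  have : IsClosed (p.topologicalClosure : Set E) := p.isClosed_topologicalClosure
  have hmk : p.topologicalClosure.mkQL x ≠ 0 := by
    simpa [Submodule.Quotient.mk_eq_zero] using hx
  obtain ⟨f, hf⟩ := SeparatingDual.exists_ne_zero (R := 𝕜) hmk
  refine ⟨f.comp p.topologicalClosure.mkQL, fun y hy => ?_, hf⟩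
  have hy' : p.topologicalClosure.mkQL y = 0 := by
    simpa [Submodule.Quotient.mk_eq_zero] using p.le_topologicalClosure hy
  simp [hy']

namespace ContinuousLinearMap

theorem tendsto_birkhoffAverage_zero_of_forall_dual_comp_eq
    (S : E →L[𝕜] E) (hS : ‖S‖ ≤ 1) {x : E}
    (hx : ∀ g : StrongDual 𝕜 E, g.comp S = g → g x = 0) :
    Tendsto (birkhoffAverage 𝕜 S id · x) atTop (𝓝 0) := by
  have hlip : LipschitzWith 1 S := S.lipschitz.weaken hS
  have hclosed : IsClosed {x | Tendsto (birkhoffAverage 𝕜 S id · x) atTop (𝓝 0)} :=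
    isClosed_setOfPred_tendsto_birkhoffAverage 𝕜 hlip uniformContinuous_id continuous_const
  have hrange : ∀ z, Tendsto (birkhoffAverage 𝕜 S id · (S z - z)) atTop (𝓝 0) := by
    intro z
    have hbdd : Bornology.IsBounded (Set.range (id <| (⇑S)^[·] z)) := by
      refine isBounded_iff_forall_norm_le.2 ⟨‖z‖, Set.forall_mem_range.2 fun n => ?_⟩
      have hzero : (⇑S)^[n] 0 = 0 := iterate_map_zero (S : E →+ E) n
      simpa [hzero] using (hlip.iterate n).dist_le_mul z 0
    have hsub : ∀ n (y y' : E), (⇑S)^[n] (y - y') = (⇑S)^[n] y - (⇑S)^[n] y' :=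
      iterate_map_sub (S : E →+ E)
    simpa [birkhoffAverage, birkhoffSum, Finset.sum_sub_distrib, smul_sub, hsub]
      using tendsto_birkhoffAverage_apply_sub_birkhoffAverage 𝕜 hbdd
  have hmem : x ∈ (LinearMap.range ((S : E →ₗ[𝕜] E) - 1)).topologicalClosure := by
    by_contra hx'
    obtain ⟨g, hg, hgx⟩ :=
      Submodule.exists_dual_eq_zero_ne_zero_of_notMem_topologicalClosure _ hx'
    refine hgx (hx g (ext fun z => ?_))
    simpa [sub_eq_zero] using hg _ (LinearMap.mem_range_self _ z)
  exact closure_minimal (Set.forall_mem_range.2 hrange) hclosed hmem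

lemma birkhoffAverage_smul_apply (c : 𝕜) (T : E →L[𝕜] E) (n : ℕ) (x : E) :
    birkhoffAverage 𝕜 (c • T) id n x = (n : 𝕜)⁻¹ • ∑ k ∈ range n, c ^ k • (T ^ k) x := by
  simp only [birkhoffAverage, birkhoffSum, id, ← FunLike.coe_pow_eq_iterate, smul_pow,
    smul_apply]

lemma norm_apply_pow_apply_of_comp_smul_eq {c : 𝕜} (hc : ‖c‖ = 1)
    {T : E →L[𝕜] E} {g : StrongDual 𝕜 E} (hg : g.comp (c • T) = g) (k : ℕ) (z : E) :
    ‖g ((T ^ k) z)‖ = ‖g z‖ := by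
  induction k with
  | zero => simp
  | succ k ih =>
    have h := congr($hg ((T ^ k) z))
    simp only [comp_apply, smul_apply, map_smul, smul_eq_mul] at h
    rw [pow_succ', mul_apply_eq_comp, ← ih, ← h, norm_mul, hc, one_mul]

end ContinuousLinearMap

end MeanErgodic

section CompletelyPositive

variable {A : Type*} [CStarAlgebra A] [PartialOrder A] [StarOrderedRing A]

/-- The form of complete positivity used in the paper: positivity of `∑ᵢⱼ bᵢ* T(aᵢ* aⱼ) bⱼ`. -/
def IsCompletelyPositive (T : A →L[ℂ] A) : Prop :=
  ∀ (n : ℕ) (a b : Fin n → A), 0 ≤ ∑ i, ∑ j, star (b i) * T (star (a i) * a j) * b j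

namespace IsCompletelyPositive

variable {T : A →L[ℂ] A}

lemma map_nonneg (hT : IsCompletelyPositive T) {u : A} (hu : 0 ≤ u) : 0 ≤ T u := by
  have h := hT 1 ![CFC.sqrt u] ![1]
  simp only [Fin.sum_univ_one, Matrix.cons_val_zero, star_one, one_mul, mul_one] at h
  rwa [(CFC.sqrt_nonneg u).isSelfAdjoint.star_eq, CFC.sqrt_mul_sqrt_self u hu] at h

noncomputable def toPositiveLinearMap (hT : IsCompletelyPositive T) : A →ₚ[ℂ] A :=
  .mk₀ T fun _ => hT.map_nonneg

lemma map_star (hT : IsCompletelyPositive T) (y : A) : T (star y) = star (T y) := by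
  have hre : IsSelfAdjoint (T (ℜ y)) := (ℜ y).2.map' hT.toPositiveLinearMap
  have him : IsSelfAdjoint (T (ℑ y)) := (ℑ y).2.map' hT.toPositiveLinearMap
  conv_lhs => rw [← realPart_add_I_smul_imaginaryPart y]
  conv_rhs => rw [← realPart_add_I_smul_imaginaryPart y]
  simp [hre.star_eq, him.star_eq, (ℜ y).2.star_eq, (ℑ y).2.star_eq]

lemma star_map_mul_map_le (hT : IsCompletelyPositive T) (hT1 : T 1 = 1) (z : A) :
    star (T z) * T z ≤ T (star z * z) := by
  have h := hT 2 ![1, z] ![-(T z), 1]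
  simp only [Fin.sum_univ_two, Matrix.cons_val_zero, Matrix.cons_val_one, star_one, one_mul,
    mul_one, star_neg, hT1, hT.map_star] at h
  refine sub_nonneg.mp (h.trans_eq ?_)
  noncomm_ring

lemma norm_le_one (hT : IsCompletelyPositive T) (hT1 : T 1 = 1) : ‖T‖ ≤ 1 := by
  nontriviality A
  refine T.opNorm_le_bound zero_le_one fun z => ?_
  rw [one_mul, ← pow_le_pow_iff_left₀ (norm_nonneg _) (norm_nonneg _) two_ne_zero]
  calc ‖T z‖ ^ 2 = ‖star (T z) * T z‖ := by rw [CStarRing.norm_star_mul_self, sq]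
    _ ≤ ‖T (star z * z)‖ :=
      CStarAlgebra.norm_le_norm_of_nonneg_of_le (star_mul_self_nonneg _)
        (hT.star_map_mul_map_le hT1 z)
    _ ≤ ‖T 1‖ * ‖star z * z‖ :=
      hT.toPositiveLinearMap.norm_apply_le_of_nonneg _ (star_mul_self_nonneg z)
    _ = ‖z‖ ^ 2 := by rw [hT1, norm_one, one_mul, CStarRing.norm_star_mul_self, sq]

end IsCompletelyPositive

end CompletelyPositive

theorem stmt17_general
    (α : ℝ) (hirr : Irrational α)
    (a : ℂ) (ha : a = Complex.exp (2 * π * α * Complex.I))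
    (m : ℕ) (hm : 1 ≤ m)
    {A : Type*} [NormedRing A] [StarRing A] [CStarRing A] [NormedAlgebra ℂ A]
    [CompleteSpace A] [StarModule ℂ A] [PartialOrder A] [StarOrderedRing A]
    (φ : A →L[ℂ] ℂ) (T : A →L[ℂ] A)
    (hT1 : T 1 = 1)
    (hTcp : ∀ (n : ℕ) (a b : Fin n → A),
      0 ≤ ∑ i, ∑ j, star (b i) * T (star (a i) * a j) * b j)
    (hmix : ∀ (ψ : A →L[ℂ] ℂ) (x : A),
      Tendsto (fun n : ℕ =>
          (1 / (n : ℝ)) * ∑ k ∈ Finset.range n, ‖ψ ((T ^ k) x) - ψ 1 * φ x‖)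
        atTop (nhds 0)) :
    ∀ x : A,
      Tendsto (fun n : ℕ =>
          (1 / (n : ℂ)) • ∑ k ∈ Finset.range n, a ^ (k * m) • (T ^ k) x)
        atTop (nhds 0) := by
  let _ : CStarAlgebra A := { ‹NormedRing A›, ‹StarRing A›, ‹CompleteSpace A›, ‹CStarRing A›,
    ‹NormedAlgebra ℂ A›, ‹StarModule ℂ A› with }
  intro x
  have hc : ‖a ^ m‖ = 1 := by rw [norm_pow, ha, norm_cexp_two_pi_mul_I, one_pow]
  have hc1 : a ^ m ≠ 1 := ha ▸ hirr.cexp_two_pi_mul_I_pow_ne_one (by omega)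
  have hS : ‖a ^ m • T‖ ≤ 1 := by
    rw [norm_smul, hc, one_mul]
    exact IsCompletelyPositive.norm_le_one hTcp hT1
  simp_rw [one_div, mul_comm _ m, pow_mul, ← ContinuousLinearMap.birkhoffAverage_smul_apply]
  refine (a ^ m • T).tendsto_birkhoffAverage_zero_of_forall_dual_comp_eq hS fun g hg => ?_
  have hg1 : g 1 = 0 := by
    have h := congr($hg 1)
    simp only [ContinuousLinearMap.comp_apply, smul_apply, hT1, map_smul, smul_eq_mul] at h
    exact (mul_left_eq_self₀.mp h).resolve_left hc1
  have haverage : (fun n : ℕ => 1 / (n : ℝ) * ∑ k ∈ range n, ‖g ((T ^ k) x) - g 1 * φ x‖) =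
      fun n : ℕ => (n : ℝ)⁻¹ * ∑ k ∈ range n, ‖g x‖ := by
    simp only [hg1, zero_mul, sub_zero, one_div,
      ContinuousLinearMap.norm_apply_pow_apply_of_comp_smul_eq hc hg]
  have hgx := tendsto_nhds_unique (haverage ▸ hmix g x) tendsto_const_nhds.cesaro
  exact norm_eq_zero.mp hgx.symm

/-- For a = exp(2πiα) with α irrational and m ≥ 1, the weighted averages
(1/n)∑ a^{km}·T^k(x) converge in norm to 0 for every strictly weak mixing C*-dynamical
system (A, φ, T) and every x ∈ A. -/
theorem stmt17
    (α : ℝ) (hirr : Irrational α) (hα : α ∈ Set.Ico (0 : ℝ) 1)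
    (a : ℂ) (ha : a = Complex.exp (2 * π * α * Complex.I))
    (m : ℕ) (hm : 1 ≤ m)
    {A : Type*} [NormedRing A] [StarRing A] [CStarRing A] [NormedAlgebra ℂ A]
    [CompleteSpace A] [StarModule ℂ A] [PartialOrder A] [StarOrderedRing A]
    (φ : A →L[ℂ] ℂ) (T : A →L[ℂ] A)
    (hφ1 : φ 1 = 1) (hφpos : ∀ x : A, 0 ≤ φ (star x * x))
    (hT1 : T 1 = 1)
    (hTcp : ∀ (n : ℕ) (a b : Fin n → A),
      0 ≤ ∑ i, ∑ j, star (b i) * T (star (a i) * a j) * b j)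
    (hinv : ∀ x : A, φ (T x) = φ x)
    (hmix : ∀ (ψ : A →L[ℂ] ℂ) (x : A),
      Tendsto (fun n : ℕ =>
          (1 / (n : ℝ)) * ∑ k ∈ Finset.range n, ‖ψ ((T ^ k) x) - ψ 1 * φ x‖)
        atTop (nhds 0)) :
    ∀ x : A,
      Tendsto (fun n : ℕ =>
          (1 / (n : ℂ)) • ∑ k ∈ Finset.range n, a ^ (k * m) • (T ^ k) x)
        atTop (nhds 0) :=
  stmt17_general α hirr a ha m hm φ T hT1 hTcp hmix
end
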